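/- The period of a nonempty closed word w equals 1 plus the number of 0s in the oc-sequence of w; equivalently, a closed word w is a complete return to its prefix of length |oc(w)|₁ − 1. -/

import Mathlib

open scoped Classical

variable {α : Type*}

def IsBorder (u w : List α) : Prop := u <+: w ∧ u <:+ w ∧ u ≠ w

def InternalOcc (u w : List α) : Prop := ∃ p s : List α, p ≠ [] ∧ s ≠ [] ∧ w = p ++ u ++ s

def ClosedWord (w : List α) : Prop := w = [] ∨ ∃ u, IsBorder u w ∧ ¬ InternalOcc u w

noncomputable def minPer (w : List α) : ℕ :=
  if w = [] then 1 else sInf {p | ∃ v, IsBorder v w ∧ p = w.length - v.length}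

noncomputable def ocL (w : List α) : List ℕ :=
  (List.range w.length).map fun i => if ClosedWord (w.take (i+1)) then 1 else 0

def prefW (w : ℕ → α) (n : ℕ) : List α := (List.range n).map w

noncomputable def ocI (w : ℕ → α) : ℕ → ℕ := fun n =>
  if ClosedWord (prefW w (n+1)) then 1 else 0

def InfixAt (w : ℕ → α) (u : List α) (i : ℕ) : Prop :=
  u = (List.range u.length).map fun j => w (i + j)

def RecurrentWord (w : ℕ → α) : Prop :=
  ∀ u : List α, (∃ i, InfixAt w u i) → ∀ N, ∃ i, N ≤ i ∧ InfixAt w u i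

def UltPeriodic (s : ℕ → α) : Prop := ∃ p, 0 < p ∧ ∃ N, ∀ n, N ≤ n → s (n + p) = s n

def PerWord (s : ℕ → α) : Prop := ∃ p, 0 < p ∧ ∀ n, s (n + p) = s n

def OccurrenceAt (u w : List α) (i : ℕ) : Prop := i + u.length ≤ w.length ∧ u <+: w.drop i

def RepeatedIn (u w : List α) : Prop := ∃ i j, i < j ∧ OccurrenceAt u w i ∧ OccurrenceAt u w j

def CompleteReturnTo (w u : List α) : Prop :=
  u <+: w ∧ u <:+ w ∧ u ≠ w ∧ ∀ i, OccurrenceAt u w i → i = 0 ∨ i = w.length - u.length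

def BalancedWord (w : List Bool) : Prop :=
  ∀ u v : List Bool, u <:+: w → v <:+: w → u.length = v.length →
    ((u.count true : ℤ) - v.count true).natAbs ≤ 1

def RightSpecialSturmian (w : List Bool) : Prop := ∀ x : Bool, BalancedWord (w ++ [x])

def stdSeq (d : ℕ → ℕ) : ℕ → List Bool
  | 0 => [true]
  | 1 => [false]
  | n+2 => (List.replicate (d n) (stdSeq d (n+1))).flatten ++ stdSeq d n

def stdInf (d : ℕ → ℕ) : ℕ → Bool := fun i => (stdSeq d (i+2)).getD i false

def IsStandardWord (s : List Bool) : Prop :=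
  ∃ d : ℕ → ℕ, (∀ n, 1 ≤ n → 1 ≤ d n) ∧ ∃ m, s = stdSeq d m

def IsCentral (u : List Bool) : Prop := ∃ x y : Bool, x ≠ y ∧ IsStandardWord (u ++ [x, y])

def LeftSpecial (u w : List Bool) : Prop := (false :: u) <:+: w ∧ (true :: u) <:+: w

def RightSpecial (u w : List Bool) : Prop := (u ++ [false]) <:+: w ∧ (u ++ [true]) <:+: w

def IsSemicentral (v : List Bool) : Prop :=
  ∃ u : List Bool,
    (u <+: v ∧ RepeatedIn u v ∧ ∀ z, z <+: v → RepeatedIn z v → z.length ≤ u.length) ∧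
    (u <:+ v ∧ RepeatedIn u v ∧ ∀ z, z <:+ v → RepeatedIn z v → z.length ≤ u.length) ∧
    (LeftSpecial u v ∧ ∀ z, LeftSpecial z v → z.length ≤ u.length ∧ (z.length = u.length → z = u)) ∧
    (RightSpecial u v ∧ ∀ z, RightSpecial z v → z.length ≤ u.length ∧ (z.length = u.length → z = u))

def contFront : List ℕ → ℕ
  | [] => 1
  | [x] => x
  | x :: y :: l => x * contFront (y :: l) + contFront l

def paperK (l : List ℕ) : ℕ := contFront l.reverse

noncomputable def lbl (u : List α) : ℕ := sSup {n | ∃ v, IsBorder v u ∧ v.length = n}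

noncomputable def Bp (w : List α) (i : ℕ) : ℕ :=
  (Finset.range (i+1)).sup fun j => lbl (w.take j)

/-!
The period of a nonempty word is `|w| - b`, where `b` is the length of its longest border. Let
`r(w)` be the length of the longest prefix of `w` that occurs again at a positive position. Every
border is such a prefix, and if `v` is a border of `w` without internal occurrences, then
`|v| = r(w)`: a longer repeated prefix would contain an internal occurrence of `v`. Appending a
letter raises `r` by at most one, and it raises `r` exactly when the extended prefix is closed.
Since `r` vanishes on the first letter, `|oc(w)|₁ = r(w) + 1`, which gives both claims.
-/

open List

section Occurrences

variable {u v w x : List α} {i : ℕ}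

theorem OccurrenceAt.of_prefix (huv : u <+: v) (h : OccurrenceAt v w i) : OccurrenceAt u w i :=
  ⟨(Nat.add_le_add_left huv.length_le i).trans h.1, huv.trans h.2⟩

theorem occurrenceAt_append_iff (y : List α) (h : i + v.length ≤ x.length) :
    OccurrenceAt v (x ++ y) i ↔ OccurrenceAt v x i := by
  have hlen : v.length ≤ (x.drop i).length := by rw [length_drop]; omega
  simp only [OccurrenceAt, length_append, h, true_and,
    drop_append_of_le_length (by omega : i ≤ x.length), prefix_iff_eq_take (l₁ := v),
    take_append_of_le_length hlen]
  exact and_iff_right (by omega)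

theorem internalOcc_of_occurrenceAt (hi : 0 < i) (hlt : i + v.length < w.length)
    (h : OccurrenceAt v w i) : InternalOcc v w := by
  obtain ⟨t, ht⟩ := h.2
  have hlen : v.length + t.length = w.length - i := by simpa using congrArg length ht
  refine ⟨w.take i, t, ?_, ?_, by rw [append_assoc, ht, take_append_drop]⟩
  · rw [ne_eq, ← length_eq_zero_iff, length_take]; omega
  · rintro rfl; rw [length_nil] at hlen; omega

theorem InternalOcc.exists_occurrenceAt (h : InternalOcc v w) :
    ∃ i, 0 < i ∧ i + v.length < w.length ∧ OccurrenceAt v w i := by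
  obtain ⟨p, s, hp, hs, rfl⟩ := h
  have hp' := length_pos_iff.mpr hp
  have hs' := length_pos_iff.mpr hs
  refine ⟨p.length, hp', by simp only [length_append]; omega, by simp, ?_⟩
  rw [append_assoc, drop_left]
  exact prefix_append v s

end Occurrences

theorem IsBorder.length_lt {v w : List α} (h : IsBorder v w) : v.length < w.length :=
  lt_of_le_of_ne h.1.length_le fun hl => h.2.2 (h.1.eq_of_length hl)

theorem IsBorder.completeReturnTo {v w : List α} (hb : IsBorder v w) (hni : ¬ InternalOcc v w) :
    CompleteReturnTo w v := by
  refine ⟨hb.1, hb.2.1, hb.2.2, fun i hi => ?_⟩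
  by_contra! hne
  have := hi.1
  exact hni (internalOcc_of_occurrenceAt (Nat.pos_of_ne_zero hne.1) (by omega) hi)

theorem minPer_eq_of_isBorder {v w : List α} (hb : IsBorder v w)
    (hmax : ∀ v', IsBorder v' w → v'.length ≤ v.length) : minPer w = w.length - v.length := by
  have hw : w ≠ [] := by rintro rfl; exact hb.2.2 (prefix_nil.mp hb.1)
  have hmem : w.length - v.length ∈ {p | ∃ v, IsBorder v w ∧ p = w.length - v.length} :=
    ⟨v, hb, rfl⟩
  obtain ⟨v', hb', heq⟩ := Nat.sInf_mem ⟨_, hmem⟩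
  rw [minPer, if_neg hw]
  have := Nat.sInf_le hmem
  have := hmax v' hb'
  omega

def RepeatedPrefix (w : List α) (k : ℕ) : Prop := ∃ i, 0 < i ∧ OccurrenceAt (w.take k) w i

noncomputable def maxRepeatedPrefix (w : List α) : ℕ := Nat.findGreatest (RepeatedPrefix w) w.length

section RepeatedPrefix

variable {u w : List α} {j k : ℕ}

theorem RepeatedPrefix.lt_length (h : RepeatedPrefix w k) : k < w.length := by
  obtain ⟨i, hi, hle, -⟩ := h
  rcases le_or_gt k w.length with hk | hk
  · rw [length_take_of_le hk] at hle; omega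
  · rw [take_of_length_le hk.le] at hle; omega

theorem RepeatedPrefix.mono (h : RepeatedPrefix w k) (hjk : j ≤ k) : RepeatedPrefix w j :=
  let ⟨i, hi, hocc⟩ := h
  ⟨i, hi, hocc.of_prefix (take_prefix_take_left hjk)⟩

theorem repeatedPrefix_zero (hw : w ≠ []) : RepeatedPrefix w 0 :=
  ⟨w.length, length_pos_iff.mpr hw, by simp, by simp⟩

theorem repeatedPrefix_maxRepeatedPrefix (hw : w ≠ []) : RepeatedPrefix w (maxRepeatedPrefix w) :=
  Nat.findGreatest_spec (Nat.zero_le _) (repeatedPrefix_zero hw)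

theorem le_maxRepeatedPrefix (h : RepeatedPrefix w k) : k ≤ maxRepeatedPrefix w :=
  Nat.le_findGreatest h.lt_length.le h

theorem maxRepeatedPrefix_lt_length (hw : w ≠ []) : maxRepeatedPrefix w < w.length :=
  (repeatedPrefix_maxRepeatedPrefix hw).lt_length

theorem maxRepeatedPrefix_singleton (a : α) : maxRepeatedPrefix [a] = 0 := by
  simpa using maxRepeatedPrefix_lt_length (w := [a]) (cons_ne_nil a [])

theorem IsBorder.repeatedPrefix {v : List α} (h : IsBorder v w) : RepeatedPrefix w v.length := by
  refine ⟨w.length - v.length, by have := h.length_lt; omega, by rw [length_take]; omega, ?_⟩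
  rw [← prefix_iff_eq_take.mp h.1, ← suffix_iff_eq_drop.mp h.2.1]

theorem occurrenceAt_take_append_iff (y : List α) (hk : i + k ≤ u.length) :
    OccurrenceAt ((u ++ y).take k) (u ++ y) i ↔ OccurrenceAt (u.take k) u i := by
  rw [take_append_of_le_length (by omega), occurrenceAt_append_iff y (by rw [length_take]; omega)]

theorem RepeatedPrefix.append (h : RepeatedPrefix u k) (y : List α) :
    RepeatedPrefix (u ++ y) k := by
  obtain ⟨i, hi, hocc⟩ := h
  have hk : i + k ≤ u.length := by have := hocc.1; rw [length_take] at this; omega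
  exact ⟨i, hi, (occurrenceAt_take_append_iff y hk).mpr hocc⟩

end RepeatedPrefix

theorem IsBorder.length_eq_maxRepeatedPrefix {v w : List α} (hb : IsBorder v w)
    (hni : ¬ InternalOcc v w) : v.length = maxRepeatedPrefix w := by
  refine le_antisymm (le_maxRepeatedPrefix hb.repeatedPrefix) (not_lt.mp fun hlt => hni ?_)
  have hw : w ≠ [] := ne_nil_of_length_pos (Nat.zero_lt_of_lt hb.length_lt)
  obtain ⟨i, hi, hocc⟩ := repeatedPrefix_maxRepeatedPrefix hw
  have hv : v <+: w.take (maxRepeatedPrefix w) := by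
    rw [prefix_take_iff]; exact ⟨hb.1, hlt.le⟩
  have := hocc.1
  rw [length_take_of_le (maxRepeatedPrefix_lt_length hw).le] at this
  exact internalOcc_of_occurrenceAt hi (by omega) (hocc.of_prefix hv)

section AppendLetter

variable {u : List α} (a : α)

theorem maxRepeatedPrefix_le_append (hu : u ≠ []) (y : List α) :
    maxRepeatedPrefix u ≤ maxRepeatedPrefix (u ++ y) :=
  le_maxRepeatedPrefix ((repeatedPrefix_maxRepeatedPrefix hu).append y)

theorem maxRepeatedPrefix_append_singleton_le :
    maxRepeatedPrefix (u ++ [a]) ≤ maxRepeatedPrefix u + 1 := by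
  set k := maxRepeatedPrefix (u ++ [a])
  rcases Nat.eq_zero_or_pos k with hk | hk
  · omega
  have hne : u ++ [a] ≠ [] := by simp
  obtain ⟨i, hi, hocc⟩ := repeatedPrefix_maxRepeatedPrefix hne
  have hle : i + k ≤ u.length + 1 := by
    have := hocc.1
    rwa [length_take_of_le (maxRepeatedPrefix_lt_length hne).le, length_append,
      length_singleton] at this
  have hocc' := hocc.of_prefix (take_prefix_take_left (Nat.sub_le k 1))
  have : k - 1 ≤ maxRepeatedPrefix u :=
    le_maxRepeatedPrefix ⟨i, hi, (occurrenceAt_take_append_iff [a] (by omega)).mp hocc'⟩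
  omega

theorem ClosedWord.maxRepeatedPrefix_append_singleton (hu : u ≠ []) (h : ClosedWord (u ++ [a])) :
    maxRepeatedPrefix (u ++ [a]) = maxRepeatedPrefix u + 1 := by
  obtain ⟨v, hb, hni⟩ := h.resolve_left (by simp)
  refine le_antisymm (maxRepeatedPrefix_append_singleton_le a) ?_
  rw [← hb.length_eq_maxRepeatedPrefix hni]
  refine not_lt.mp fun hlt => hni ?_
  obtain ⟨j, hj, hocc⟩ := (repeatedPrefix_maxRepeatedPrefix hu).mono (Nat.le_of_lt_succ hlt)
  have hle := hocc.1
  rw [length_take_of_le (by have := maxRepeatedPrefix_lt_length hu; omega)] at hle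
  have hocc' := (occurrenceAt_take_append_iff [a] hle).mpr hocc
  rw [← prefix_iff_eq_take.mp hb.1] at hocc'
  exact internalOcc_of_occurrenceAt hj (by simp only [length_append, length_singleton]; omega) hocc'

theorem closedWord_append_singleton_of_maxRepeatedPrefix (hu : u ≠ [])
    (h : maxRepeatedPrefix (u ++ [a]) = maxRepeatedPrefix u + 1) : ClosedWord (u ++ [a]) := by
  set k := maxRepeatedPrefix u
  have hk := maxRepeatedPrefix_lt_length hu
  have hlen : (u ++ [a]).length = u.length + 1 := by simp
  have hshort : ∀ j, 0 < j → j + (k + 1) ≤ u.length →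
      ¬ OccurrenceAt ((u ++ [a]).take (k + 1)) (u ++ [a]) j := fun j hj hle hocc =>
    (le_maxRepeatedPrefix ⟨j, hj, (occurrenceAt_take_append_iff [a] hle).mp hocc⟩).not_gt (by omega)
  obtain ⟨i, hi, hocc⟩ := repeatedPrefix_maxRepeatedPrefix (w := u ++ [a]) (by simp)
  rw [h] at hocc
  have htake : ((u ++ [a]).take (k + 1)).length = k + 1 := by rw [length_take, hlen]; omega
  have hend : i + (k + 1) = u.length + 1 := by
    have := hocc.1
    rw [htake, hlen] at this
    by_contra hne
    exact hshort i hi (by omega) hocc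
  refine Or.inr ⟨(u ++ [a]).take (k + 1), ⟨take_prefix _ _, ?_, fun heq => ?_⟩, fun hint => ?_⟩
  · rw [hocc.2.eq_of_length (by rw [htake, length_drop, hlen]; omega)]
    exact drop_suffix _ _
  · have := congrArg length heq
    omega
  · obtain ⟨j, hj, hlt, hocc'⟩ := hint.exists_occurrenceAt
    exact hshort j hj (by omega) hocc'

theorem closedWord_append_singleton_iff (hu : u ≠ []) :
    ClosedWord (u ++ [a]) ↔ maxRepeatedPrefix (u ++ [a]) = maxRepeatedPrefix u + 1 :=
  ⟨ClosedWord.maxRepeatedPrefix_append_singleton a hu,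
    closedWord_append_singleton_of_maxRepeatedPrefix a hu⟩

end AppendLetter

theorem closedWord_singleton (a : α) : ClosedWord [a] := by
  refine Or.inr ⟨[], ⟨nil_prefix, nil_suffix, by simp⟩, fun h => ?_⟩
  obtain ⟨i, hi, hlt, -⟩ := h.exists_occurrenceAt
  rw [length_nil, length_singleton] at hlt
  omega

theorem ocL_append_singleton (u : List α) (a : α) :
    ocL (u ++ [a]) = ocL u ++ [if ClosedWord (u ++ [a]) then 1 else 0] := by
  rw [ocL, ocL, length_append, length_singleton, range_succ, map_append, map_singleton,
    show u.length + 1 = (u ++ [a]).length by simp, take_length]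
  congr 1
  refine map_congr_left fun i hi => ?_
  rw [take_append_of_le_length (mem_range.mp hi)]

theorem count_one_ocL {w : List α} (hw : w ≠ []) : (ocL w).count 1 = maxRepeatedPrefix w + 1 := by
  induction w using reverseRecOn with
  | nil => exact absurd rfl hw
  | append_singleton u a ih =>
    rcases eq_or_ne u [] with rfl | hu
    · simp [ocL, closedWord_singleton, maxRepeatedPrefix_singleton]
    rw [ocL_append_singleton, count_append, ih hu]
    by_cases hc : ClosedWord (u ++ [a])
    · simp [hc, (closedWord_append_singleton_iff a hu).mp hc]
    · have := maxRepeatedPrefix_le_append hu [a]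
      have := maxRepeatedPrefix_append_singleton_le (u := u) a
      have := (closedWord_append_singleton_iff a hu).not.mp hc
      rw [if_neg hc, show [0].count 1 = 0 from rfl]
      omega

theorem count_zero_add_count_one_ocL (w : List α) :
    (ocL w).count 0 + (ocL w).count 1 = w.length := by
  have hlen : (ocL w).length = w.length := by simp [ocL]
  rw [← hlen, length_eq_countP_add_countP (· == 0), count, count]
  congr 1
  refine countP_congr fun x hx => ?_
  simp only [ocL, mem_map] at hx
  obtain ⟨i, -, rfl⟩ := hx
  split_ifs <;> simp

theorem stmt6 {α : Type*} (w : List α) (hw : w ≠ []) (h : ClosedWord w) :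
    minPer w = 1 + (ocL w).count 0 ∧
      CompleteReturnTo w (w.take ((ocL w).count 1 - 1)) := by
  obtain ⟨v, hb, hni⟩ := h.resolve_left hw
  have hv := hb.length_eq_maxRepeatedPrefix hni
  have hone := count_one_ocL hw
  have hsum := count_zero_add_count_one_ocL w
  have hlt := hb.length_lt
  constructor
  · rw [minPer_eq_of_isBorder hb fun v' hv' => hv ▸ le_maxRepeatedPrefix hv'.repeatedPrefix]
    omega
  · rw [show (ocL w).count 1 - 1 = v.length by omega, ← prefix_iff_eq_take.mp hb.1]
    exact hb.completeReturnTo hni
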